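/- arXiv:2209.00289 — 4 statements merged into one kernel-verified Lean document; each statement's English description precedes it below -/
import Mathlib

section
/- Let G be a finite group that is a partial semidirect product of two abelian subgroups A and B, i.e., A is normal in G and G = AB. Consider the subgroup K of Sym(G) generated by the left translations by elements of A and the right translations by elements of B. Then K is abelian and acts transitively (hence regularly) on G. -/
/-!
Left translations commute with right translations by associativity, so the generators of `K`
commute pairwise once `A` and `B` are abelian, and `K` is abelian. Since `g ↦ a * g * b` sends `1`
to `a * b`, the factorisation `G = AB` says that the `K`-orbit of `1` is all of `G`. Finally, an
element commuting with a transitive set of permutations and fixing one point fixes every point.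
-/

namespace Equiv.Perm

variable {α : Type*}

theorem eq_one_of_commute_of_apply_eq_self {S : Set (Perm α)} {x : α}
    (hS : ∀ y, ∃ σ ∈ S, σ x = y) {τ : Perm α} (hτ : ∀ σ ∈ S, Commute τ σ) (hx : τ x = x) :
    τ = 1 := by
  ext y
  obtain ⟨σ, hσ, rfl⟩ := hS y
  rw [← Perm.mul_apply, (hτ σ hσ).eq, Perm.mul_apply, hx, Perm.one_apply]

theorem exists_mem_apply_eq_of_forall_exists_mem_apply_eq {S : Subgroup (Perm α)} {x : α}
    (hS : ∀ y, ∃ σ ∈ S, σ x = y) (y z : α) : ∃ σ ∈ S, σ y = z := by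
  obtain ⟨σ, hσ, rfl⟩ := hS y
  obtain ⟨τ, hτ, rfl⟩ := hS z
  exact ⟨τ * σ⁻¹, S.mul_mem hτ (S.inv_mem hσ), by simp⟩

end Equiv.Perm

section Translations

variable {G : Type*} [Group G]

theorem commute_mulLeft_mulRight (a b : G) : Commute (Equiv.mulLeft a) (Equiv.mulRight b) :=
  Equiv.ext fun g => (mul_assoc a g b).symm

def translationSubgroup (A B : Subgroup G) : Subgroup (Equiv.Perm G) :=
  Subgroup.closure ({σ | ∃ a ∈ A, σ = Equiv.mulLeft a} ∪ {σ | ∃ b ∈ B, σ = Equiv.mulRight b})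

variable {A B : Subgroup G}

theorem translationSubgroup_mul_comm (hA : ∀ a ∈ A, ∀ a' ∈ A, a * a' = a' * a)
    (hB : ∀ b ∈ B, ∀ b' ∈ B, b * b' = b' * b) :
    ∀ k ∈ translationSubgroup A B, ∀ k' ∈ translationSubgroup A B, k * k' = k' * k := by
  have : IsMulCommutative (translationSubgroup A B) := Subgroup.isMulCommutative_closure <| by
    rintro _ (⟨a, ha, rfl⟩ | ⟨b, hb, rfl⟩) _ (⟨a', ha', rfl⟩ | ⟨b', hb', rfl⟩)
    · rw [← Equiv.mulLeft_mul, ← Equiv.mulLeft_mul, hA a ha a' ha']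
    · exact commute_mulLeft_mulRight a b'
    · exact (commute_mulLeft_mulRight a' b).symm
    · rw [← Equiv.mulRight_mul, ← Equiv.mulRight_mul, hB b hb b' hb']
  exact fun k hk k' hk' => setLike_mul_comm hk hk'

theorem exists_mem_translationSubgroup_apply_one_eq (hAB : ∀ g : G, ∃ a ∈ A, ∃ b ∈ B, g = a * b)
    (g : G) : ∃ k ∈ translationSubgroup A B, k 1 = g := by
  obtain ⟨a, ha, b, hb, rfl⟩ := hAB g
  refine ⟨Equiv.mulLeft a * Equiv.mulRight b, Subgroup.mul_mem _ ?_ ?_, by simp⟩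
  · exact Subgroup.subset_closure (Or.inl ⟨a, ha, rfl⟩)
  · exact Subgroup.subset_closure (Or.inr ⟨b, hb, rfl⟩)

end Translations

theorem stmt_2_general {G : Type*} [Group G] (A B : Subgroup G)
    (hAab : ∀ a ∈ A, ∀ a' ∈ A, a * a' = a' * a)
    (hBab : ∀ b ∈ B, ∀ b' ∈ B, b * b' = b' * b)
    (hAB : ∀ g : G, ∃ a ∈ A, ∃ b ∈ B, g = a * b) :
    let K : Subgroup (Equiv.Perm G) :=
      Subgroup.closure ({σ | ∃ a ∈ A, σ = Equiv.mulLeft a} ∪ {σ | ∃ b ∈ B, σ = Equiv.mulRight b})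
    (∀ k ∈ K, ∀ k' ∈ K, k * k' = k' * k) ∧
    (∀ g g' : G, ∃ k ∈ K, k g = g') ∧
    (∀ k ∈ K, k (1 : G) = 1 → k = 1) := by
  intro K
  have hcomm : ∀ k ∈ K, ∀ k' ∈ K, k * k' = k' * k := translationSubgroup_mul_comm hAab hBab
  have horbit : ∀ g : G, ∃ k ∈ K, k 1 = g := exists_mem_translationSubgroup_apply_one_eq hAB
  exact ⟨hcomm, Equiv.Perm.exists_mem_apply_eq_of_forall_exists_mem_apply_eq horbit,
    fun k hk hk1 => Equiv.Perm.eq_one_of_commute_of_apply_eq_self horbit (hcomm k hk) hk1⟩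

theorem stmt_2 {G : Type*} [Group G] [Finite G] (A B : Subgroup G)
    (hA : A.Normal) (hAab : ∀ a ∈ A, ∀ a' ∈ A, a * a' = a' * a)
    (hBab : ∀ b ∈ B, ∀ b' ∈ B, b * b' = b' * b)
    (hAB : ∀ g : G, ∃ a ∈ A, ∃ b ∈ B, g = a * b) :
    let K : Subgroup (Equiv.Perm G) :=
      Subgroup.closure ({σ | ∃ a ∈ A, σ = Equiv.mulLeft a} ∪ {σ | ∃ b ∈ B, σ = Equiv.mulRight b})
    (∀ k ∈ K, ∀ k' ∈ K, k * k' = k' * k) ∧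
    (∀ g g' : G, ∃ k ∈ K, k g = g') ∧
    (∀ k ∈ K, k (1 : G) = 1 → k = 1) :=
  stmt_2_general A B hAab hBab hAB
end

section
/- Let p be a prime, k ≥ 3, and G a nonabelian group of order p^k with p ∈ {2,3} possessing a cyclic subgroup of index p. If G is not the generalized quaternion group, then G has a normal cyclic subgroup A of order p^{k-1} and a cyclic subgroup B of order p with G = AB. -/
/-!
Let `A = ⟨a⟩` be the cyclic subgroup of index `p`; it is normal and maximal. Pick `x ∉ A` and write
`x a x⁻¹ = a ^ r`, `x ^ p = a ^ m`. Then `(a ^ t x) ^ p = a ^ (t (1 + r + ⋯ + r ^ (p - 1)) + m)`,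
so `B = ⟨a ^ t x⟩` is a cyclic complement of `A` as soon as `t` solves
`t (1 + r + ⋯ + r ^ (p - 1)) + m ≡ 0 [ZMOD p ^ (k - 1)]`.
Since `G` is not abelian, `r ≢ 1`, and since `x` commutes with `x ^ p`, `m (r - 1) ≡ 0`.
For `p = 3` this makes the congruence solvable, because `9 ∤ 1 + r + r ^ 2` and `3 ∣ m`.
For `p = 2` it is solvable unless `r ≡ -1` and `m ≡ 2 ^ (k - 2)`, and these are the defining
relations of the generalized quaternion group.
-/

open Subgroup Pointwise

theorem exists_dvd_mul_add_of_gcd_dvd {R : Type*} [CommRing R] [IsDomain R] [IsBezout R]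
    [GCDMonoid R] {s n m : R} (h : gcd s n ∣ m) : ∃ t, n ∣ t * s + m := by
  obtain ⟨u, v, rfl⟩ := (gcd_dvd_iff_exists s n).1 h
  exact ⟨-u, v, by ring⟩

theorem gcd_prime_pow_dvd_pow_of_not_dvd {α : Type*} [CommMonoidWithZero α] [GCDMonoid α]
    {p s : α} (hp : Prime p) (e : ℕ) {j : ℕ} (hs : ¬ p ^ (j + 1) ∣ s) :
    gcd s (p ^ e) ∣ p ^ j := by
  obtain ⟨i, -, hi⟩ := (dvd_prime_pow hp e).1 (gcd_dvd_right s (p ^ e))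
  have hij : i ≤ j := by
    by_contra! hij
    exact hs ((pow_dvd_pow p hij).trans (hi.symm.dvd.trans (gcd_dvd_left s _)))
  exact hi.dvd.trans (pow_dvd_pow p hij)

theorem Prime.dvd_of_pow_dvd_mul_of_not_pow_dvd {R : Type*} [CommRing R] [IsDomain R]
    [IsBezout R] {p m d : R} (hp : Prime p) {e : ℕ}
    (h : p ^ e ∣ m * d) (hd : ¬ p ^ e ∣ d) : p ∣ m := by
  by_contra hm
  exact hd (((hp.coprime_iff_not_dvd.2 hm).pow_left).dvd_of_dvd_mul_left h)

theorem not_nine_dvd_one_add_add_sq (r : ℤ) : ¬ (9 : ℤ) ∣ 1 + r + r ^ 2 := by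
  rw [← Nat.cast_ofNat, ← ZMod.intCast_zmod_eq_zero_iff_dvd]
  push_cast
  generalize (r : ZMod 9) = x
  revert x
  decide

theorem exists_three_pow_dvd_mul_add {e : ℕ} {r m : ℤ} (hm : 3 ^ e ∣ m * (r - 1))
    (hr : ¬ 3 ^ e ∣ r - 1) : ∃ t, 3 ^ e ∣ t * (1 + r + r ^ 2) + m := by
  have hgcd : gcd (1 + r + r ^ 2) (3 ^ e) ∣ 3 ^ 1 :=
    gcd_prime_pow_dvd_pow_of_not_dvd Int.prime_three e (not_nine_dvd_one_add_add_sq r)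
  rw [pow_one] at hgcd
  exact exists_dvd_mul_add_of_gcd_dvd
    (hgcd.trans (Int.prime_three.dvd_of_pow_dvd_mul_of_not_pow_dvd hm hr))

theorem exists_two_pow_dvd_mul_add {e : ℕ} {r m : ℤ} (hm : 2 ^ (e + 1) ∣ m * (r - 1))
    (hr : ¬ 2 ^ (e + 1) ∣ r - 1) :
    (∃ t, 2 ^ (e + 1) ∣ t * (1 + r) + m) ∨ (2 ^ (e + 1) ∣ r + 1 ∧ 2 ^ (e + 1) ∣ m - 2 ^ e) := by
  by_cases h4 : (2 : ℤ) ^ 2 ∣ 1 + r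
  · obtain ⟨c, hc⟩ := h4
    have hm' : (2 : ℤ) ^ e ∣ m := by
      have hodd : IsCoprime ((2 : ℤ) ^ e) (2 * c - 1) :=
        (Int.prime_two.coprime_iff_not_dvd (n := 2 * c - 1)).2 (by omega) |>.pow_left
      refine hodd.dvd_of_dvd_mul_right ((mul_dvd_mul_iff_left (two_ne_zero (α := ℤ))).1 ?_)
      rwa [← pow_succ', show 2 * (m * (2 * c - 1)) = m * (r - 1) by linear_combination (-m) * hc]
    by_cases hN : (2 : ℤ) ^ (e + 1) ∣ r + 1
    · obtain ⟨v, rfl⟩ := hm'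
      rcases Int.even_or_odd' v with ⟨w, rfl | rfl⟩
      · exact .inl ⟨0, w, by ring⟩
      · exact .inr ⟨hN, w, by ring⟩
    · refine .inl (exists_dvd_mul_add_of_gcd_dvd
        ((gcd_prime_pow_dvd_pow_of_not_dvd Int.prime_two _ ?_).trans hm'))
      rwa [add_comm 1 r]
  · have hgcd : gcd (1 + r) (2 ^ (e + 1)) ∣ 2 ^ 1 :=
      gcd_prime_pow_dvd_pow_of_not_dvd Int.prime_two _ h4
    rw [pow_one] at hgcd
    exact .inl (exists_dvd_mul_add_of_gcd_dvd
      (hgcd.trans (Int.prime_two.dvd_of_pow_dvd_mul_of_not_pow_dvd hm hr)))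

theorem Subgroup.isCoatom_of_index_prime {G : Type*} [Group G] {H : Subgroup G}
    (hH : H.index.Prime) : IsCoatom H := by
  refine ⟨fun h => by simp [h, Nat.not_prime_one] at hH, fun K hK => ?_⟩
  rw [← relIndex_mul_index hK.le, Nat.prime_mul_iff] at hH
  rcases hH with ⟨-, hK1⟩ | ⟨-, hHK⟩
  · exact index_eq_one.1 hK1
  · exact absurd (relIndex_eq_one.1 hHK) hK.not_ge

theorem exists_cyclic_complement {G : Type*} [Group G] {A : Subgroup G} [A.Normal]
    (hA : IsCoatom A) {p : ℕ} (hp : p.Prime) {b : G} (hb : b ∉ A) (hbp : b ^ p = 1) :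
    ∃ B : Subgroup G, IsCyclic B ∧ Nat.card B = p ∧ ∀ g : G, ∃ a ∈ A, ∃ c ∈ B, g = a * c := by
  have : Fact p.Prime := ⟨hp⟩
  have htop : A ⊔ zpowers b = ⊤ := hA.2 _ <| SetLike.lt_iff_le_and_exists.2
    ⟨le_sup_left, b, mem_sup_right (mem_zpowers b), hb⟩
  refine ⟨zpowers b, inferInstance, ?_, fun g => ?_⟩
  · rw [Nat.card_zpowers, orderOf_eq_prime hbp (by rintro rfl; exact hb A.one_mem)]
  · obtain ⟨a, ha, c, hc, rfl⟩ : g ∈ (A : Set G) * (zpowers b : Set G) := by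
      rw [← normal_mul, htop]; trivial
    exact ⟨a, ha, c, hc, rfl⟩

section Metacyclic

variable {G : Type*} [Group G] {a x : G} {r : ℤ}

theorem mul_zpow_eq_zpow_mul_of_conj (h : x * a * x⁻¹ = a ^ r) (z : ℤ) :
    x * a ^ z = a ^ (r * z) * x := by
  rw [zpow_mul, ← h, conj_zpow, inv_mul_cancel_right]

theorem zpow_mul_pow_eq_of_conj (h : x * a * x⁻¹ = a ^ r) (t : ℤ) (n : ℕ) :
    (a ^ t * x) ^ n = a ^ (t * ∑ i ∈ Finset.range n, r ^ i) * x ^ n := by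
  induction n with
  | zero => simp
  | succ n ih =>
    rw [pow_succ', ih, geom_sum_succ, pow_succ', mul_assoc, ← mul_assoc x,
      mul_zpow_eq_zpow_mul_of_conj h, ← mul_assoc, ← mul_assoc, ← zpow_add, mul_assoc]
    congr 2
    ring

theorem orderOf_dvd_mul_sub_one_of_conj (h : x * a * x⁻¹ = a ^ r) {n : ℕ} {m : ℤ}
    (hm : x ^ n = a ^ m) : (orderOf a : ℤ) ∣ m * (r - 1) := by
  have hcomm : a ^ (r * m) * x = a ^ m * x := by
    rw [← mul_zpow_eq_zpow_mul_of_conj h, ← hm, ← pow_succ', pow_succ]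
  rw [orderOf_dvd_iff_zpow_eq_one, mul_sub_one, zpow_sub, mul_comm, mul_right_cancel hcomm,
    mul_inv_cancel]

theorem mul_comm_of_orderOf_dvd_sub_one (hA : IsCoatom (zpowers a)) (hx : x ∉ zpowers a)
    (h : x * a * x⁻¹ = a ^ r) (hr : (orderOf a : ℤ) ∣ r - 1) (g g' : G) : g * g' = g' * g := by
  have hax : x * a = a * x := by
    rw [← mul_inv_eq_iff_eq_mul, h, ← zpow_one a, ← zpow_mul, one_mul,
      zpow_eq_zpow_iff_modEq, Int.modEq_iff_dvd]
    rwa [← dvd_neg, neg_sub]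
  have htop : closure {a, x} = ⊤ := hA.2 _ <| SetLike.lt_iff_le_and_exists.2
    ⟨zpowers_le.2 (subset_closure (by simp)), x, subset_closure (by simp), hx⟩
  have : IsMulCommutative (closure {a, x}) := isMulCommutative_closure <| by
    rintro _ (rfl | rfl) _ (rfl | rfl) <;> simp [hax]
  exact setLike_mul_comm (htop ▸ mem_top g) (htop ▸ mem_top g')

theorem exists_cyclic_complement_of_dvd [(zpowers a).Normal] (hA : IsCoatom (zpowers a))
    (hx : x ∉ zpowers a) (h : x * a * x⁻¹ = a ^ r) {p : ℕ} (hp : p.Prime) {m t : ℤ}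
    (hm : x ^ p = a ^ m) (ht : (orderOf a : ℤ) ∣ t * ∑ i ∈ Finset.range p, r ^ i + m) :
    ∃ B : Subgroup G, IsCyclic B ∧ Nat.card B = p ∧
      ∀ g : G, ∃ c ∈ zpowers a, ∃ d ∈ B, g = c * d := by
  refine exists_cyclic_complement hA hp (b := a ^ t * x) (fun hb => hx ?_) ?_
  · exact (mul_mem_cancel_left (zpow_mem (mem_zpowers a) t)).1 hb
  · rwa [zpow_mul_pow_eq_of_conj h, hm, ← zpow_add, ← orderOf_dvd_iff_zpow_eq_one]

end Metacyclic

theorem nonempty_mulEquiv_quaternionGroup {G : Type*} [Group G] [Finite G] {n : ℕ} [NeZero n]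
    {a x : G} (ha : orderOf a = 2 * n) (hx : x ∉ zpowers a) (hxa : x * a * x⁻¹ = a⁻¹)
    (hx2 : x ^ 2 = a ^ n) (hcard : Nat.card G = 4 * n) :
    Nonempty (G ≃* QuaternionGroup n) := by
  let ψ : ZMod (2 * n) → G := fun i => a ^ i.val
  have hψ_add (i j : ZMod (2 * n)) : ψ (i + j) = ψ i * ψ j := by
    simp only [ψ, ZMod.val_add, ← ha, pow_mod_orderOf, pow_add]
  have hψ_sub (i j : ZMod (2 * n)) : ψ (j - i) = (ψ i)⁻¹ * ψ j := by
    rw [eq_inv_mul_iff_mul_eq, ← hψ_add, add_sub_cancel]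
  have hψ_n : ψ n = a ^ n := by
    simp only [ψ, ZMod.val_natCast, ← ha, pow_mod_orderOf]
  have hx_mul (i : ZMod (2 * n)) : x * ψ i = (ψ i)⁻¹ * x := by
    rw [← mul_inv_eq_iff_eq_mul, ← conj_pow, hxa, inv_pow]
  have hx_mul_inv (i : ZMod (2 * n)) : x * (ψ i)⁻¹ = ψ i * x := by
    rw [← mul_inv_eq_iff_eq_mul, ← conj_inv, mul_inv_eq_iff_eq_mul.2 (hx_mul i), inv_inv]
  let f : QuaternionGroup n → G
    | .a i => ψ i
    | .xa i => x * ψ i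
  have hf : ∀ q q' : QuaternionGroup n, f (q * q') = f q * f q' := by
    rintro (i | i) (j | j)
    · simp only [QuaternionGroup.a_mul_a, f, hψ_add]
    · simp only [QuaternionGroup.a_mul_xa, f, hψ_sub, ← mul_assoc, hx_mul_inv]
    · simp only [QuaternionGroup.xa_mul_a, f, hψ_add, mul_assoc]
    · simp only [QuaternionGroup.xa_mul_xa, f, hψ_sub, hψ_add, hψ_n]
      calc (ψ i)⁻¹ * (a ^ n * ψ j) = x ^ 2 * (ψ i)⁻¹ * ψ j := by
            rw [hx2, ← mul_assoc, ((Commute.pow_pow_self a i.val n).inv_left).eq]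
        _ = x * ψ i * (x * ψ j) := by rw [sq, mul_assoc x x, hx_mul_inv]; group
  let φ : QuaternionGroup n →* G := MonoidHom.mk' f hf
  have hφ : Function.Injective φ := by
    rw [injective_iff_map_eq_one]
    rintro (i | i) h
    · have hi : orderOf a ∣ i.val := orderOf_dvd_of_pow_eq_one h
      rw [ha] at hi
      rw [(ZMod.val_eq_zero i).1 (Nat.eq_zero_of_dvd_of_lt hi (ZMod.val_lt i)),
        QuaternionGroup.one_def]
    · refine absurd ?_ hx
      rw [eq_inv_of_mul_eq_one_left (h : x * a ^ i.val = 1)]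
      exact inv_mem (pow_mem (mem_zpowers a) _)
  have hbij : Function.Bijective φ := (Nat.bijective_iff_injective_and_card φ).2
    ⟨hφ, by rw [hcard, Nat.card_eq_fintype_card, QuaternionGroup.card]⟩
  exact ⟨(MulEquiv.ofBijective φ hbij).symm⟩

theorem nonempty_mulEquiv_quaternionGroup_of_dvd {G : Type*} [Group G] [Finite G] {e : ℕ}
    {a x : G} {r m : ℤ} (ha : orderOf a = 2 ^ (e + 1)) (hx : x ∉ zpowers a)
    (h : x * a * x⁻¹ = a ^ r) (hm : x ^ 2 = a ^ m) (hr : 2 ^ (e + 1) ∣ r + 1)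
    (hm' : 2 ^ (e + 1) ∣ m - 2 ^ e) (hcard : Nat.card G = 2 ^ (e + 2)) :
    Nonempty (G ≃* QuaternionGroup (2 ^ e)) := by
  refine nonempty_mulEquiv_quaternionGroup (n := 2 ^ e) (by rw [ha, pow_succ']) hx ?_ ?_
    (by rw [hcard]; ring)
  · rw [h, ← zpow_neg_one, zpow_eq_zpow_iff_modEq, Int.modEq_iff_dvd, ha]
    push_cast
    rwa [← neg_add', dvd_neg, add_comm (1 : ℤ)]
  · rw [hm, ← zpow_natCast, zpow_eq_zpow_iff_modEq, Int.modEq_iff_dvd, ha]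
    push_cast
    rwa [← dvd_neg, neg_sub]

theorem stmt_5 {p k : ℕ} (hp : p.Prime) (hk : 3 ≤ k) (hp23 : p = 2 ∨ p = 3)
    {G : Type*} [Group G] [Fintype G] (hcard : Fintype.card G = p ^ k)
    (hnab : ¬ ∀ x y : G, x * y = y * x)
    (hC : ∃ C : Subgroup G, IsCyclic C ∧ C.index = p)
    (hQ : ¬ Nonempty (G ≃* QuaternionGroup (2 ^ (k - 2)))) :
    ∃ A B : Subgroup G, A.Normal ∧ IsCyclic A ∧ Nat.card A = p ^ (k - 1) ∧
      IsCyclic B ∧ Nat.card B = p ∧ ∀ g : G, ∃ a ∈ A, ∃ b ∈ B, g = a * b := by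
  obtain ⟨A, hAcyc, hAidx⟩ := hC
  have hG : Nat.card G = p ^ k := by rw [Nat.card_eq_fintype_card, hcard]
  have hAcard : Nat.card A = p ^ (k - 1) := Nat.eq_of_mul_eq_mul_right hp.pos <| by
    rw [pow_sub_one_mul (by omega), ← hG, ← hAidx, A.card_mul_index]
  have hAn : A.Normal :=
    normal_of_index_eq_minFac_card (by rw [hAidx, hG, hp.pow_minFac (by omega)])
  have hAmax : IsCoatom A := isCoatom_of_index_prime (hAidx ▸ hp)
  obtain ⟨a, rfl⟩ := (A.isCyclic_iff_exists_zpowers_eq_top).1 hAcyc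
  have ha : orderOf a = p ^ (k - 1) := Nat.card_zpowers a ▸ hAcard
  obtain ⟨x, hx⟩ := SetLike.exists_not_mem_of_ne_top _ hAmax.1
  obtain ⟨r, hr⟩ := mem_zpowers_iff.1 (hAn.conj_mem _ (mem_zpowers a) x)
  obtain ⟨m, hm⟩ := mem_zpowers_iff.1 (hAidx ▸ pow_index_mem _ x)
  have hrm := orderOf_dvd_mul_sub_one_of_conj hr.symm hm.symm
  have hr1 : ¬ (orderOf a : ℤ) ∣ r - 1 := fun h =>
    hnab (mul_comm_of_orderOf_dvd_sub_one hAmax hx hr.symm h)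
  suffices ∃ t : ℤ, (orderOf a : ℤ) ∣ t * ∑ i ∈ Finset.range p, r ^ i + m by
    obtain ⟨t, ht⟩ := this
    obtain ⟨B, hB⟩ := exists_cyclic_complement_of_dvd hAmax hx hr.symm hp hm.symm ht
    exact ⟨_, B, hAn, hAcyc, hAcard, hB⟩
  rw [ha] at hrm hr1 ⊢
  rcases hp23 with rfl | rfl <;> push_cast at hrm hr1 ⊢
  · obtain ⟨e, rfl⟩ : ∃ e, k = e + 2 := ⟨k - 2, by omega⟩
    rw [show e + 2 - 1 = e + 1 by omega] at ha hrm hr1 ⊢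
    rcases exists_two_pow_dvd_mul_add hrm hr1 with ht | ⟨hr2, hm2⟩
    · simpa [Finset.sum_range_succ] using ht
    · exact absurd (nonempty_mulEquiv_quaternionGroup_of_dvd ha hx hr.symm hm.symm hr2 hm2 hG) hQ
  · simpa [Finset.sum_range_succ] using exists_three_pow_dvd_mul_add hrm hr1
end

section
/- Let G be a Frobenius group with Frobenius kernel K. Then (G, K) is a Camina pair: every coset gK with g ∉ K is contained in the conjugacy class of g in G. -/
/-!
The sets of nonidentity elements fixing a given point are pairwise disjoint and each has
`|G| / |α| - 1` elements, so exactly `|α|` elements of `G` fix no point or are trivial, i.e. lie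
in `K`. Since no nonidentity element of `K` fixes a point, `K` therefore acts regularly on `α`.
Given `g ∉ K` and `k ∈ K`, both `g` and `g * k` fix points `x` and `y`; if `h ∈ K` moves `x`
to `y`, then `h * g * h⁻¹` and `g * k` both fix `y` and agree modulo `K`, hence are equal.
-/

open MulAction Finset

section FrobeniusAction

variable {G α : Type*} [Group G] [MulAction G α]

lemma nat_card_stabilizer_mul_nat_card [IsPretransitive G α] (x : α) :
    Nat.card (stabilizer G x) * Nat.card α = Nat.card G := by
  rw [← index_stabilizer_of_transitive G x, Subgroup.card_mul_index]

lemma finite_of_isPretransitive [Finite G] [IsPretransitive G α] [Nonempty α] : Finite α :=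
  .of_surjective (· • Classical.arbitrary α) (exists_smul_eq G _)

lemma ncard_fixedPointFree_union_one [Finite G] [IsPretransitive G α] [Nonempty α]
    (hfrob : ∀ g : G, g ≠ 1 → ∀ x y : α, g • x = x → g • y = y → x = y) :
    ({g : G | ∀ x : α, g • x ≠ x} ∪ {1}).ncard = Nat.card α := by
  classical
  obtain ⟨x₀⟩ := ‹Nonempty α›
  have := finite_of_isPretransitive (G := G) (α := α)
  have := Fintype.ofFinite G
  have := Fintype.ofFinite α
  have hstab (x : α) : Nat.card (stabilizer G x) = Nat.card G / Nat.card α :=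
    (Nat.div_eq_of_eq_mul_left Nat.card_pos (nat_card_stabilizer_mul_nat_card x).symm).symm
  have hle : Nat.card α ≤ Nat.card G :=
    nat_card_stabilizer_mul_nat_card (G := G) x₀ ▸ Nat.le_mul_of_pos_left _ Nat.card_pos
  let S : Finset G := univ.biUnion fun x : α => (stabilizer G x : Set G).toFinset.erase 1
  have hS : #S = Nat.card G - Nat.card α := by
    rw [card_biUnion]
    · rw [sum_congr rfl fun x _ => by
        rw [card_erase_of_mem (Set.mem_toFinset.2 (one_mem _)), Set.toFinset_card,
          ← Nat.card_eq_fintype_card, SetLike.coe_sort_coe, hstab x]]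
      rw [sum_const, card_univ, smul_eq_mul, ← Nat.card_eq_fintype_card, Nat.mul_sub_one,
        Nat.mul_div_cancel' (Dvd.intro_left _ (nat_card_stabilizer_mul_nat_card x₀))]
    · intro x _ y _ hxy
      simp only [Function.onFun, disjoint_left, mem_erase, Set.mem_toFinset, SetLike.mem_coe,
        mem_stabilizer_iff]
      exact fun g ⟨hg, hx⟩ ⟨_, hy⟩ => hxy (hfrob g hg x y hx hy)
  have hcompl : {g : G | ∀ x : α, g • x ≠ x} ∪ {1} = ↑(univ \ S) := by
    ext g; simp [S]; tauto
  rw [hcompl, Set.ncard_coe_finset, card_sdiff_of_subset (subset_univ _), card_univ, hS,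
    ← Nat.card_eq_fintype_card, Nat.sub_sub_self hle]

lemma Subgroup.exists_mem_smul_eq_of_nat_card_le [Finite α] {K : Subgroup G}
    (hfree : ∀ k ∈ K, ∀ x : α, k • x = x → k = 1) (hcard : Nat.card α ≤ Nat.card K)
    (x y : α) : ∃ k ∈ K, k • x = y := by
  have hinj : Function.Injective fun k : K => (k : G) • x := fun k₁ k₂ h =>
    Subtype.ext (inv_mul_eq_one.mp <| hfree _ (K.mul_mem (K.inv_mem k₂.2) k₁.2) x <| by
      simp only at h; rw [mul_smul, h, inv_smul_smul]).symm
  obtain ⟨k, hk⟩ := (hinj.bijective_of_nat_card_le hcard).surjective y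
  exact ⟨k, k.2, hk⟩

lemma isConj_mul_of_smul_eq_self {K : Subgroup G} [K.Normal]
    (hfree : ∀ k ∈ K, ∀ x : α, k • x = x → k = 1)
    (htransK : ∀ x y : α, ∃ k ∈ K, k • x = y) {g k : G} (hk : k ∈ K) {x y : α}
    (hx : g • x = x) (hy : (g * k) • y = y) : IsConj g (g * k) := by
  obtain ⟨h, hh, rfl⟩ := htransK x y
  have hconj : (h * g * h⁻¹) • h • x = h • x := by rw [mul_smul, mul_smul, inv_smul_smul, hx]
  have hmem : (h * g * h⁻¹)⁻¹ * (g * k) ∈ K := by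
    have hcomm : g⁻¹ * h⁻¹ * g ∈ K := by
      simpa using Subgroup.Normal.conj_mem ‹_› _ (K.inv_mem hh) g⁻¹
    rw [show (h * g * h⁻¹)⁻¹ * (g * k) = h * (g⁻¹ * h⁻¹ * g) * k by group]
    exact K.mul_mem (K.mul_mem hh hcomm) hk
  have hone := hfree _ hmem (h • x) (by rw [mul_smul, hy, inv_smul_eq_iff, hconj])
  exact isConj_iff.mpr ⟨h, inv_mul_eq_one.mp hone⟩

end FrobeniusAction

theorem stmt_9_general {G : Type*} [Group G] [Finite G] {α : Type*}
    [MulAction G α] (htrans : MulAction.IsPretransitive G α)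
    (hfrob : ∀ g : G, g ≠ 1 → ∀ x y : α, g • x = x → g • y = y → x = y)
    (K : Subgroup G) (hKnormal : K.Normal)
    (hK : (K : Set G) = {g : G | ∀ x : α, g • x ≠ x} ∪ {1}) :
    ∀ g : G, g ∉ K → ∀ k ∈ K, IsConj g (g * k) := by
  have hmem (g : G) : g ∈ K ↔ (∀ x : α, g • x ≠ x) ∨ g = 1 := by
    rw [← SetLike.mem_coe, hK]; rfl
  have hfree : ∀ k ∈ K, ∀ x : α, k • x = x → k = 1 := fun k hk x hx =>
    ((hmem k).1 hk).resolve_left fun h => h x hx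
  have hfix (g : G) (hg : g ∉ K) : ∃ x : α, g • x = x := by
    by_contra! h
    exact hg ((hmem g).2 (.inl h))
  intro g hg k hk
  obtain ⟨x, hx⟩ := hfix g hg
  obtain ⟨y, hy⟩ := hfix (g * k) fun hgk => hg (by simpa using K.mul_mem hgk (K.inv_mem hk))
  have : Nonempty α := ⟨x⟩
  have := finite_of_isPretransitive (G := G) (α := α)
  have hcard : Nat.card α ≤ Nat.card K := by
    rw [← SetLike.coe_sort_coe, Nat.card_coe_set_eq, hK, ncard_fixedPointFree_union_one hfrob]
  exact isConj_mul_of_smul_eq_self hfree (K.exists_mem_smul_eq_of_nat_card_le hfree hcard) hk hx hy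

theorem stmt_9 {G : Type*} [Group G] [Finite G] {α : Type*} [Nonempty α]
    [MulAction G α] (htrans : MulAction.IsPretransitive G α)
    (hfaithful : ∀ g : G, (∀ x : α, g • x = x) → g = 1)
    (hfrob : ∀ g : G, g ≠ 1 → ∀ x y : α, g • x = x → g • y = y → x = y)
    (K : Subgroup G) (hKnormal : K.Normal)
    (hK : (K : Set G) = {g : G | ∀ x : α, g • x ≠ x} ∪ {1}) :
    ∀ g : G, g ∉ K → ∀ k ∈ K, IsConj g (g * k) :=
  stmt_9_general htrans hfrob K hKnormal hK
end

section
/- Let G = P ⋊ ⟨σ⟩ where P is elementary abelian of order p^k and σ a Singer cycle. Then every conjugacy class of G not contained in P is exactly a single coset of P. -/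
/-!
Conjugation in `P ⋊ ⟨σ⟩` fixes the `⟨σ⟩`-component, since `⟨σ⟩` is abelian. Conversely, a
nontrivial `τ ∈ ⟨σ⟩` commutes with the transitive group `⟨σ⟩`, so a fixed point `x ≠ 1` of `τ`
would make `τ` fix all of `P`; hence `τ` is fixed-point-free, and on the finite group `P` the map
`x ↦ x / τ x` is onto. Conjugating `(n, τ)` by `x ∈ P` gives `(n * (x / τ x), τ)`, so the whole
coset `P τ` is one conjugacy class.
-/

open MonoidHom

namespace SemidirectProduct

variable {N G : Type*} [Group G]

theorem right_eq_of_isConj [Group N] [IsMulCommutative G] {φ : G →* MulAut N}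
    {g h : N ⋊[φ] G} (hgh : IsConj g h) : h.right = g.right := by
  obtain ⟨c, rfl⟩ := isConj_iff.mp hgh
  simp only [mul_right, inv_right, mul_comm' c.right, mul_inv_cancel_right]

theorem isConj_of_right_eq [CommGroup N] [Finite N] {φ : G →* MulAut N} {g h : N ⋊[φ] G}
    (hfree : FixedPointFree (φ g.right)) (hgh : h.right = g.right) : IsConj g h := by
  obtain ⟨x, hx⟩ := hfree.commutatorMap_surjective (h.left / g.left)
  refine isConj_iff.mpr ⟨inl x, SemidirectProduct.ext ?_ (by simp [hgh])⟩
  rw [commutatorMap_apply] at hx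
  simp only [mul_left, inv_left, left_inl, right_inl, mul_right, one_mul, inv_one, map_one,
    map_inv, MulAut.one_apply]
  rw [mul_right_comm, ← div_eq_mul_inv, hx, div_mul_cancel]

end SemidirectProduct

theorem MulAut.fixedPointFree_of_commute {P : Type*} [MulOneClass P] {σ τ : MulAut P}
    (htrans : ∀ x y : P, x ≠ 1 → y ≠ 1 → ∃ m : ℤ, (σ ^ m) x = y) (hcomm : Commute τ σ)
    (hτ : τ ≠ 1) : FixedPointFree τ := by
  intro x hx
  by_contra hx1
  refine hτ (MulEquiv.ext fun y => ?_)
  rcases eq_or_ne y 1 with rfl | hy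
  · simp
  obtain ⟨m, rfl⟩ := htrans x y hx1 hy
  rw [MulAut.one_apply, ← MulAut.mul_apply, (hcomm.zpow_right m).eq, MulAut.mul_apply, hx]

theorem stmt_16_general
    {P : Type*} [CommGroup P] [Fintype P] (σ : MulAut P)
    (htrans : ∀ x y : P, x ≠ 1 → y ≠ 1 → ∃ m : ℤ, (σ ^ m) x = y) :
    ∀ g : P ⋊[(Subgroup.zpowers σ).subtype] (Subgroup.zpowers σ), g.right ≠ 1 →
      {h : P ⋊[(Subgroup.zpowers σ).subtype] (Subgroup.zpowers σ) | IsConj g h} =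
        {h | h.right = g.right} := by
  intro g hg
  ext h
  refine ⟨SemidirectProduct.right_eq_of_isConj, SemidirectProduct.isConj_of_right_eq ?_⟩
  obtain ⟨n, hn⟩ := Subgroup.mem_zpowers_iff.mp g.right.2
  refine MulAut.fixedPointFree_of_commute htrans ?_ (by simpa using hg)
  simp only [Subgroup.coe_subtype, ← hn]
  exact (Commute.refl σ).zpow_left n

theorem stmt_16 {p k : ℕ} (hp : p.Prime) (hk : 2 ≤ k)
    {P : Type*} [CommGroup P] [Fintype P] (hcard : Fintype.card P = p ^ k)
    (helem : ∀ x : P, x ^ p = 1) (σ : MulAut P)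
    (htrans : ∀ x y : P, x ≠ 1 → y ≠ 1 → ∃ m : ℤ, (σ ^ m) x = y) :
    ∀ g : P ⋊[(Subgroup.zpowers σ).subtype] (Subgroup.zpowers σ), g.right ≠ 1 →
      {h : P ⋊[(Subgroup.zpowers σ).subtype] (Subgroup.zpowers σ) | IsConj g h} =
        {h | h.right = g.right} :=
  stmt_16_general σ htrans
end
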